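/- For a fully injective similarity scheme, the equivalence relation R_∞ on Y^ℕ is closed (its graph is closed in Y^ℕ × Y^ℕ); consequently X_∞ = Y^ℕ/R_∞ with the quotient topology is a compact Hausdorff space. -/

import Mathlib

/-!
The graph of `simRel` is the diagonal together with the sets `gammaPairs n` of pairs of addresses
of a common point of `X n`; each is closed, being the projection along the compact `X n` of a
closed set. Minimality bounds the level: if `a` and `b` differ in coordinate `m`, a common point
at a level `k + 1 > m + 1` that is not in the image of `φs k` would force `a` and `b` to agree on
their first `k` coordinates, so the point comes from below and one descends to level `m + 1`.
Off the diagonal the relation is therefore locally one closed set `gammaPairs (m + 1)`, hence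
closed. A closed equivalence relation on the compact space `ℕ → Y` makes the quotient map proper,
so the quotient is compact and Hausdorff.
-/

set_option linter.unusedSectionVars false
set_option linter.unusedVariables false

variable {Y : Type}

/-- Iterated embedding φ_{n,m} : X m → X n for m ≤ n. -/
def phiTo (X : ℕ → Type) (φs : ∀ n, X n → X (n + 1)) {m n : ℕ} (h : m ≤ n) (x : X m) : X n :=
  Nat.leRecOn h (fun {k} x => φs k x) x

/-- Iterated projection π_{m,q} : Yᵐ × X q → X (q+m), the head of the word acting outermost. -/
def piFin (X : ℕ → Type) (πo : ∀ n, Y → X n → X (n + 1)) :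
    ∀ (m q : ℕ), (Fin m → Y) → X q → X (q + m)
  | 0, _, _, x => x
  | m + 1, q, y, x => πo (q + m) (y 0) (piFin X πo m q (fun i => y i.succ) x)

/-- Iterated projection π_{m,0} : Yᵐ × X 0 → X m. -/
def piFin0 (X : ℕ → Type) (πo : ∀ n, Y → X n → X (n + 1)) :
    ∀ (m : ℕ), (Fin m → Y) → X 0 → X m
  | 0, _, x => x
  | m + 1, y, x => πo m (y 0) (piFin0 X πo m (fun i => y i.succ) x)

/-- The set Γ_n(x_n) ⊂ Y^ℕ : all infinite addresses y such that for every p ≥ n the point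
φ_{p,n}(x_n) lies in the cell C(y₁,…,y_p) = π_{p,0}({(y₁,…,y_p)} × X 0). -/
def Gamma (X : ℕ → Type) (φs : ∀ n, X n → X (n + 1)) (πo : ∀ n, Y → X n → X (n + 1))
    (n : ℕ) (xn : X n) : Set (ℕ → Y) :=
  { y | ∀ p, ∀ h : n ≤ p, ∃ x0 : X 0, phiTo X φs h xn = piFin0 X πo p (fun i : Fin p => y i.1) x0 }

/-- The relation R on Y^ℕ: related iff equal or both in some Γ_n(x_n). -/
def simRel (X : ℕ → Type) (φs : ∀ n, X n → X (n + 1)) (πo : ∀ n, Y → X n → X (n + 1)) :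
    (ℕ → Y) → (ℕ → Y) → Prop :=
  fun a b => a = b ∨ ∃ n, ∃ xn : X n, a ∈ Gamma X φs πo n xn ∧ b ∈ Gamma X φs πo n xn

theorem isClosed_setOf_exists_of_compactSpace {K Z : Type*} [TopologicalSpace K]
    [CompactSpace K] [TopologicalSpace Z] {P : K → Z → Prop}
    (hP : IsClosed {q : K × Z | P q.1 q.2}) : IsClosed {z | ∃ k, P k z} := by
  convert isClosedMap_snd_of_compactSpace _ hP
  ext z
  simp only [Set.mem_ofPred_eq, Set.mem_image, Prod.exists, exists_eq_right]

section ClosedEquivalence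

variable {Z : Type*} [TopologicalSpace Z] [CompactSpace Z] {r : Z → Z → Prop}

theorem isClosedMap_quot_mk_of_isClosed (hr : Equivalence r)
    (hc : IsClosed {p : Z × Z | r p.1 p.2}) : IsClosedMap (Quot.mk r) := by
  intro C hC
  rw [← isQuotientMap_quot_mk.isClosed_preimage]
  have hsat : IsClosed {b | ∃ a, a ∈ C ∧ r a b} :=
    isClosed_setOf_exists_of_compactSpace ((hC.preimage continuous_fst).inter hc)
  convert hsat using 1
  ext b
  simp only [Set.mem_preimage, Set.mem_image, hr.quot_mk_eq_iff _ _, Set.mem_ofPred_eq]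

theorem isProperMap_quot_mk_of_isClosed (hr : Equivalence r)
    (hc : IsClosed {p : Z × Z | r p.1 p.2}) : IsProperMap (Quot.mk r) := by
  refine isProperMap_iff_isClosedMap_and_compact_fibers.mpr
    ⟨continuous_quot_mk, isClosedMap_quot_mk_of_isClosed hr hc, fun q => ?_⟩
  obtain ⟨a, rfl⟩ := Quot.exists_rep q
  have hfiber : Quot.mk r ⁻¹' {Quot.mk r a} = {b | r a b} := by
    ext b
    simp only [Set.mem_preimage, Set.mem_singleton_iff, Set.mem_ofPred_eq, eq_comm,
      hr.quot_mk_eq_iff _ _]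
  rw [hfiber]
  exact (hc.preimage (Continuous.prodMk_right a)).isCompact

theorem t2Space_quot_of_isClosed (hr : Equivalence r) (hc : IsClosed {p : Z × Z | r p.1 p.2}) :
    T2Space (Quot r) := by
  have hq := isProperMap_quot_mk_of_isClosed hr hc
  have hqq : Topology.IsQuotientMap (Prod.map (Quot.mk r) (Quot.mk r)) :=
    (hq.prodMap hq).isClosedMap.isQuotientMap (hq.prodMap hq).continuous
      (Quot.mk_surjective.prodMap Quot.mk_surjective)
  rw [t2_iff_isClosed_diagonal, ← hqq.isClosed_preimage]
  convert hc using 1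
  ext p
  exact hr.quot_mk_eq_iff _ _

end ClosedEquivalence

section Scheme

variable {X : ℕ → Type} (φs : ∀ n, X n → X (n + 1)) (πo : ∀ n, Y → X n → X (n + 1))

theorem phiTo_self {n : ℕ} (h : n ≤ n) (x : X n) : phiTo X φs h x = x :=
  Nat.leRecOn_self x

theorem phiTo_succ {m n : ℕ} (h : m ≤ n) (h' : m ≤ n + 1) (x : X m) :
    phiTo X φs h' x = φs n (phiTo X φs h x) :=
  Nat.leRecOn_succ h x

theorem phiTo_phi {n p : ℕ} (h : n + 1 ≤ p) (h' : n ≤ p) (x : X n) :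
    phiTo X φs h (φs n x) = phiTo X φs h' x := by
  unfold phiTo
  rw [Nat.leRecOn_trans (Nat.le_succ n) h x, Nat.leRecOn_succ']

theorem continuous_phiTo [∀ n, TopologicalSpace (X n)] (hφc : ∀ n, Continuous (φs n))
    {m n : ℕ} (h : m ≤ n) : Continuous (phiTo X φs h) := by
  induction n, h using Nat.le_induction with
  | base => exact continuous_id.congr fun x => (phiTo_self φs _ x).symm
  | succ n h ih => exact ((hφc n).comp ih).congr fun x => (phiTo_succ φs h _ x).symm

theorem continuous_piFin0 [TopologicalSpace Y] [∀ n, TopologicalSpace (X n)]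
    (hπc : ∀ n, Continuous fun p : Y × X n => πo n p.1 p.2) (m : ℕ) :
    Continuous fun p : (Fin m → Y) × X 0 => piFin0 X πo m p.1 p.2 := by
  induction m with
  | zero => exact continuous_snd
  | succ m ih =>
    have htail : Continuous fun p : (Fin (m + 1) → Y) × X 0 => (fun i : Fin m => p.1 i.succ, p.2) :=
      (continuous_pi fun i => (continuous_apply i.succ).comp continuous_fst).prodMk continuous_snd
    exact (hπc m).comp (((continuous_apply 0).comp continuous_fst).prodMk (ih.comp htail))

def ProjCommutesWithEmbedding : Prop :=
  ∀ (n : ℕ) (y : Y) (x : X n), πo (n + 1) y (φs n x) = φs (n + 1) (πo n y x)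

/-- Minimality of the scheme: `π_n` identifies two distinct pairs only when both points come
from `X 0` and are already identified there. -/
def IdentificationsFromBase : Prop :=
  ∀ (n : ℕ) (y y' : Y) (ξ ξ' : X n), πo n y ξ = πo n y' ξ' → (y, ξ) ≠ (y', ξ') →
    ∃ x0 x0' : X 0, ξ = phiTo X φs (Nat.zero_le n) x0 ∧ ξ' = phiTo X φs (Nat.zero_le n) x0' ∧
      πo 0 y x0 = πo 0 y' x0'

def IsFullyInjective : Prop :=
  ∀ (p : ℕ) (xp xp' : X p) (y : ℕ → Y),
    y ∈ Gamma X φs πo p xp → y ∈ Gamma X φs πo p xp' → xp = xp'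

theorem proj_phiTo_zero (hcomm : ProjCommutesWithEmbedding φs πo) (n : ℕ) (y : Y) (a : X 0) :
    πo n y (phiTo X φs (Nat.zero_le n) a)
      = phiTo X φs (Nat.succ_le_succ (Nat.zero_le n)) (πo 0 y a) := by
  induction n with
  | zero => rw [phiTo_self, phiTo_self]
  | succ n ih =>
    rw [phiTo_succ φs (Nat.zero_le n), hcomm, ih,
      ← phiTo_succ φs (Nat.succ_le_succ (Nat.zero_le n))]

def cell (p : ℕ) (y : ℕ → Y) : Set (X p) :=
  {x | ∃ c : X 0, x = piFin0 X πo p (fun i : Fin p => y i.1) c}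

theorem mem_cell_zero (y : ℕ → Y) (x : X 0) : x ∈ cell πo 0 y :=
  ⟨x, rfl⟩

theorem mem_cell_succ {n : ℕ} {y : ℕ → Y} {x : X (n + 1)} :
    x ∈ cell πo (n + 1) y ↔ ∃ z ∈ cell πo n (fun k => y (k + 1)), x = πo n (y 0) z := by
  constructor
  · rintro ⟨c, rfl⟩
    exact ⟨_, ⟨c, rfl⟩, rfl⟩
  · rintro ⟨_, ⟨c, rfl⟩, rfl⟩
    exact ⟨c, rfl⟩

theorem mem_cell_of_phi_mem_cell (hφi : ∀ n, Function.Injective (φs n))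
    (hπs : ∀ n, Function.Surjective fun p : Y × X n => πo n p.1 p.2)
    (hcomm : ProjCommutesWithEmbedding φs πo) (hquot : IdentificationsFromBase φs πo)
    {n : ℕ} {y : ℕ → Y} {x : X n} (hx : φs n x ∈ cell πo (n + 1) y) : x ∈ cell πo n y := by
  induction n generalizing y with
  | zero => exact mem_cell_zero πo y x
  | succ n ih =>
    obtain ⟨⟨η, ξ⟩, rfl⟩ := hπs n x
    obtain ⟨w, hw, hφx⟩ := (mem_cell_succ πo).mp hx
    rw [← hcomm n η ξ] at hφx
    refine (mem_cell_succ πo).mpr ?_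
    by_cases hpair : (y 0, w) = (η, φs n ξ)
    · obtain ⟨h0, rfl⟩ := Prod.mk.inj hpair
      exact ⟨ξ, ih hw, by rw [h0]⟩
    · obtain ⟨a, b, rfl, hb, hab⟩ := hquot (n + 1) (y 0) η w (φs n ξ) hφx.symm hpair
      have hξ : ξ = phiTo X φs (Nat.zero_le n) b :=
        hφi n (by rw [hb, phiTo_succ φs (Nat.zero_le n)])
      rw [phiTo_succ φs (Nat.zero_le n)] at hw
      refine ⟨_, ih hw, ?_⟩
      change πo n η ξ = πo n (y 0) (phiTo X φs (Nat.zero_le n) a)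
      rw [hξ, proj_phiTo_zero φs πo hcomm, proj_phiTo_zero φs πo hcomm, hab]

theorem eq_of_mem_cell_of_notMem_range (hcomm : ProjCommutesWithEmbedding φs πo)
    (hquot : IdentificationsFromBase φs πo) {n : ℕ} {y y' : ℕ → Y} {z : X (n + 1)}
    (hy : z ∈ cell πo (n + 1) y) (hy' : z ∈ cell πo (n + 1) y') (hz : z ∉ Set.range (φs n)) :
    ∀ i < n, y i = y' i := by
  induction n generalizing y y' with
  | zero => exact fun i hi => absurd hi (Nat.not_lt_zero i)
  | succ n ih =>
    obtain ⟨w, hw, rfl⟩ := (mem_cell_succ πo).mp hy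
    obtain ⟨w', hw', hww'⟩ := (mem_cell_succ πo).mp hy'
    by_cases hpair : (y 0, w) = (y' 0, w')
    · obtain ⟨h0, rfl⟩ := Prod.mk.inj hpair
      have hw_range : w ∉ Set.range (φs n) := by
        rintro ⟨v, rfl⟩
        exact hz ⟨πo n (y 0) v, (hcomm n (y 0) v).symm⟩
      have htail := ih hw hw' hw_range
      rintro (_ | i) hi
      · exact h0
      · exact htail i (by omega)
    · obtain ⟨a, -, rfl, -, -⟩ := hquot (n + 1) (y 0) (y' 0) w w' hww' hpair
      refine absurd ⟨phiTo X φs (Nat.succ_le_succ (Nat.zero_le n)) (πo 0 (y 0) a), ?_⟩ hz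
      rw [proj_phiTo_zero φs πo hcomm, phiTo_succ φs (Nat.succ_le_succ (Nat.zero_le n))]

theorem phi_mem_Gamma_succ {n : ℕ} {x : X n} {y : ℕ → Y} (hy : y ∈ Gamma X φs πo n x) :
    y ∈ Gamma X φs πo (n + 1) (φs n x) := fun p hp => by
  rw [phiTo_phi φs hp (Nat.le_of_succ_le hp)]
  exact hy p _

theorem phiTo_mem_Gamma {n k : ℕ} (h : n ≤ k) {x : X n} {y : ℕ → Y}
    (hy : y ∈ Gamma X φs πo n x) : y ∈ Gamma X φs πo k (phiTo X φs h x) := by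
  induction k, h using Nat.le_induction with
  | base => rwa [phiTo_self]
  | succ k hk ih => rw [phiTo_succ φs hk]; exact phi_mem_Gamma_succ φs πo ih

theorem mem_Gamma_of_phi_mem_Gamma_succ (hφi : ∀ n, Function.Injective (φs n))
    (hπs : ∀ n, Function.Surjective fun p : Y × X n => πo n p.1 p.2)
    (hcomm : ProjCommutesWithEmbedding φs πo) (hquot : IdentificationsFromBase φs πo)
    {n : ℕ} {x : X n} {y : ℕ → Y} (hy : y ∈ Gamma X φs πo (n + 1) (φs n x)) :
    y ∈ Gamma X φs πo n x := by
  intro p hp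
  rcases hp.eq_or_lt with rfl | hlt
  · rw [phiTo_self]
    have hcell := hy (n + 1) le_rfl
    rw [phiTo_self] at hcell
    exact mem_cell_of_phi_mem_cell φs πo hφi hπs hcomm hquot hcell
  · rw [← phiTo_phi φs hlt]
    exact hy p hlt

def gammaPairs (n : ℕ) : Set ((ℕ → Y) × (ℕ → Y)) :=
  {q | ∃ x : X n, q.1 ∈ Gamma X φs πo n x ∧ q.2 ∈ Gamma X φs πo n x}

/-- Above level `m + 1` the common point lies in the image of the embedding, since otherwise the
two addresses would agree up to coordinate `m`. -/
theorem mem_gammaPairs_succ_of_ne (hφi : ∀ n, Function.Injective (φs n))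
    (hπs : ∀ n, Function.Surjective fun p : Y × X n => πo n p.1 p.2)
    (hcomm : ProjCommutesWithEmbedding φs πo) (hquot : IdentificationsFromBase φs πo)
    {n m : ℕ} {q : (ℕ → Y) × (ℕ → Y)} (hq : q ∈ gammaPairs φs πo n) (hm : q.1 m ≠ q.2 m) :
    q ∈ gammaPairs φs πo (m + 1) := by
  induction n with
  | zero =>
    obtain ⟨x, h1, h2⟩ := hq
    exact ⟨_, phiTo_mem_Gamma φs πo (Nat.zero_le _) h1, phiTo_mem_Gamma φs πo (Nat.zero_le _) h2⟩
  | succ k ih =>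
    obtain ⟨x, h1, h2⟩ := hq
    rcases le_or_gt (k + 1) (m + 1) with hle | hgt
    · exact ⟨_, phiTo_mem_Gamma φs πo hle h1, phiTo_mem_Gamma φs πo hle h2⟩
    by_cases hx : x ∈ Set.range (φs k)
    · obtain ⟨z, rfl⟩ := hx
      exact ih ⟨z, mem_Gamma_of_phi_mem_Gamma_succ φs πo hφi hπs hcomm hquot h1,
        mem_Gamma_of_phi_mem_Gamma_succ φs πo hφi hπs hcomm hquot h2⟩
    · have hc1 := h1 (k + 1) le_rfl
      have hc2 := h2 (k + 1) le_rfl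
      rw [phiTo_self] at hc1 hc2
      exact absurd (eq_of_mem_cell_of_notMem_range φs πo hcomm hquot hc1 hc2 hx m (by omega)) hm

theorem mem_Gamma_of_mem_Gamma_of_le (hfull : IsFullyInjective φs πo) {n k : ℕ} (h : n ≤ k)
    {x : X n} {x' : X k} {a b : ℕ → Y} (ha : a ∈ Gamma X φs πo n x) (hb : b ∈ Gamma X φs πo n x)
    (hb' : b ∈ Gamma X φs πo k x') : a ∈ Gamma X φs πo k x' :=
  hfull k _ _ b (phiTo_mem_Gamma φs πo h hb) hb' ▸ phiTo_mem_Gamma φs πo h ha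

theorem simRel_equivalence (hfull : IsFullyInjective φs πo) : Equivalence (simRel X φs πo) where
  refl _ := Or.inl rfl
  symm
    | Or.inl h => Or.inl h.symm
    | Or.inr ⟨n, x, ha, hb⟩ => Or.inr ⟨n, x, hb, ha⟩
  trans
    | Or.inl rfl, hbc => hbc
    | hab, Or.inl rfl => hab
    | Or.inr ⟨n, x, ha, hb⟩, Or.inr ⟨k, x', hb', hc⟩ => by
      rcases le_total n k with h | h
      · exact Or.inr ⟨k, x', mem_Gamma_of_mem_Gamma_of_le φs πo hfull h ha hb hb', hc⟩
      · exact Or.inr ⟨n, x, ha, mem_Gamma_of_mem_Gamma_of_le φs πo hfull h hc hb' hb⟩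

theorem isClosed_setOf_mem_cell [TopologicalSpace Y] [∀ n, TopologicalSpace (X n)]
    [CompactSpace (X 0)] (hπc : ∀ n, Continuous fun p : Y × X n => πo n p.1 p.2) (p : ℕ)
    [T2Space (X p)] : IsClosed {q : X p × (ℕ → Y) | q.1 ∈ cell πo p q.2} := by
  have hword : Continuous fun r : X 0 × (X p × (ℕ → Y)) => (fun i : Fin p => r.2.2 i.1, r.1) :=
    (continuous_pi fun i => (continuous_apply i.1).comp (continuous_snd.comp continuous_snd)).prodMk
      continuous_fst
  exact isClosed_setOf_exists_of_compactSpace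
    (isClosed_eq (continuous_fst.comp continuous_snd) ((continuous_piFin0 πo hπc p).comp hword))

theorem isClosed_setOf_mem_Gamma [TopologicalSpace Y] [∀ n, TopologicalSpace (X n)]
    [CompactSpace (X 0)] [∀ n, T2Space (X n)] (hφc : ∀ n, Continuous (φs n))
    (hπc : ∀ n, Continuous fun p : Y × X n => πo n p.1 p.2) (n : ℕ) :
    IsClosed {q : X n × (ℕ → Y) | q.2 ∈ Gamma X φs πo n q.1} := by
  have hset : {q : X n × (ℕ → Y) | q.2 ∈ Gamma X φs πo n q.1}
      = ⋂ p, ⋂ h : n ≤ p, (fun q => (phiTo X φs h q.1, q.2)) ⁻¹' {r | r.1 ∈ cell πo p r.2} := by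
    ext q
    simp only [Set.mem_iInter]
    rfl
  rw [hset]
  exact isClosed_iInter fun p => isClosed_iInter fun h =>
    (isClosed_setOf_mem_cell πo hπc p).preimage
      (((continuous_phiTo φs hφc h).comp continuous_fst).prodMk continuous_snd)

theorem isClosed_gammaPairs [TopologicalSpace Y] [∀ n, TopologicalSpace (X n)]
    [∀ n, CompactSpace (X n)] [∀ n, T2Space (X n)] (hφc : ∀ n, Continuous (φs n))
    (hπc : ∀ n, Continuous fun p : Y × X n => πo n p.1 p.2) (n : ℕ) :
    IsClosed (gammaPairs φs πo n) := by
  have hgraph := isClosed_setOf_mem_Gamma φs πo hφc hπc n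
  exact isClosed_setOf_exists_of_compactSpace
    ((hgraph.preimage (continuous_fst.prodMk (continuous_fst.comp continuous_snd))).inter
      (hgraph.preimage (continuous_fst.prodMk (continuous_snd.comp continuous_snd))))

/-- Off the diagonal, `simRel` is covered by the open sets `{q | q.1 m ≠ q.2 m}`, on each of which
it coincides with the closed set `gammaPairs (m + 1)`. -/
theorem isClosed_simRel [TopologicalSpace Y] [T2Space Y] [∀ n, TopologicalSpace (X n)]
    [∀ n, CompactSpace (X n)] [∀ n, T2Space (X n)] (hφc : ∀ n, Continuous (φs n))
    (hφi : ∀ n, Function.Injective (φs n))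
    (hπc : ∀ n, Continuous fun p : Y × X n => πo n p.1 p.2)
    (hπs : ∀ n, Function.Surjective fun p : Y × X n => πo n p.1 p.2)
    (hcomm : ProjCommutesWithEmbedding φs πo) (hquot : IdentificationsFromBase φs πo) :
    IsClosed {q : (ℕ → Y) × (ℕ → Y) | simRel X φs πo q.1 q.2} := by
  have hcompl : {q : (ℕ → Y) × (ℕ → Y) | simRel X φs πo q.1 q.2}ᶜ
      = ⋃ m, {q | q.1 m ≠ q.2 m} ∩ (gammaPairs φs πo (m + 1))ᶜ := by
    ext q
    simp only [Set.mem_compl_iff, Set.mem_ofPred_eq, Set.mem_iUnion, Set.mem_inter_iff]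
    constructor
    · intro hq
      obtain ⟨m, hm⟩ := Function.ne_iff.mp fun h => hq (Or.inl h)
      exact ⟨m, hm, fun hmem => hq (Or.inr ⟨m + 1, hmem⟩)⟩
    · rintro ⟨m, hm, hnot⟩ (heq | ⟨n, hn⟩)
      · exact hm (congrFun heq m)
      · exact hnot (mem_gammaPairs_succ_of_ne φs πo hφi hπs hcomm hquot hn hm)
  rw [← isOpen_compl_iff, hcompl]
  exact isOpen_iUnion fun m =>
    (isOpen_ne_fun ((continuous_apply m).comp continuous_fst)
      ((continuous_apply m).comp continuous_snd)).inter
      (isClosed_gammaPairs φs πo hφc hπc (m + 1)).isOpen_compl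

end Scheme

variable {X : ℕ → Type}
  [TopologicalSpace Y] [CompactSpace Y] [T2Space Y]
  [∀ n, TopologicalSpace (X n)] [∀ n, CompactSpace (X n)] [∀ n, T2Space (X n)]

theorem statement_16
    (φs : ∀ n, X n → X (n + 1)) (πo : ∀ n, Y → X n → X (n + 1))
    (hφc : ∀ n, Continuous (φs n)) (hφi : ∀ n, Function.Injective (φs n))
    (hπc : ∀ n, Continuous fun p : Y × X n => πo n p.1 p.2)
    (hπs : ∀ n, Function.Surjective fun p : Y × X n => πo n p.1 p.2)
    (hcomm : ∀ (n : ℕ) (y : Y) (x : X n), πo (n + 1) y (φs n x) = φs (n + 1) (πo n y x))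
    (hquot : ∀ (n : ℕ) (y y' : Y) (ξ ξ' : X n), πo n y ξ = πo n y' ξ' → (y, ξ) ≠ (y', ξ') →
      ∃ x0 x0' : X 0, ξ = phiTo X φs (Nat.zero_le n) x0 ∧ ξ' = phiTo X φs (Nat.zero_le n) x0' ∧
        πo 0 y x0 = πo 0 y' x0')
    (hfull : ∀ (p : ℕ) (xp xp' : X p) (y : ℕ → Y),
      y ∈ Gamma X φs πo p xp → y ∈ Gamma X φs πo p xp' → xp = xp') :
    IsClosed {p : (ℕ → Y) × (ℕ → Y) | simRel X φs πo p.1 p.2} ∧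
    CompactSpace (Quot (simRel X φs πo)) ∧ T2Space (Quot (simRel X φs πo)) := by
  have hclosed := isClosed_simRel φs πo hφc hφi hπc hπs hcomm hquot
  exact ⟨hclosed, inferInstance,
    t2Space_quot_of_isClosed (simRel_equivalence φs πo hfull) hclosed⟩
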